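/- Let r be an admissible regularizer on the closed unit ball B = {w ∈ ℝ² : ‖w‖ ≤ 1}. Then there exist two points w₁, w₂ ∈ B and a real number δ with −0.005‖w₁‖ < δ < 0.005‖w₁‖ such that w₂ = w₁ + δ·w₁⊥ and r(w₁) ≠ r(w₂), where for w = (a, b) the vector w⊥ denotes (b, −a). -/

import Mathlib

/-!
Identify ℝ² with ℂ, so that `w + δ w⊥ = (1 - δi) w`. If `r` never changes along such moves,
then moving `z / (1 - δi)` by `±δ` shows that `r` is invariant under rotation by
`2 arctan δ` for small `δ`, hence (by connectedness of ℝ) under all rotations. A single move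
from `s > 0` reaches norm `s √(1 + δ²)`, so `r` is also locally constant along `(0, 1]`.
Thus `r` is constant on the punctured ball, which an admissible regularizer is not.
-/

open MeasureTheory Metric

noncomputable section

abbrev Euc (d : ℕ) := EuclideanSpace ℝ (Fin d)

def toE2 (x y : ℝ) : Euc 2 := (WithLp.equiv 2 (Fin 2 → ℝ)).symm ![x, y]

/-- For `w = (a, b)`, `perp w = (b, −a)`. -/
def perp (w : Euc 2) : Euc 2 := toE2 (w 1) (-(w 0))

/-- An admissible regularizer on `W`: nonnegative with minimum value `0`,
non-constant on `W \ {0}`, and upper semi-continuous in the sense that every point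
penalized by `r` is also penalized under small perturbations. -/
def AdmissibleOn (W : Set (Euc 2)) (r : Euc 2 → ℝ) : Prop :=
  (∀ w ∈ W, 0 ≤ r w) ∧ (∃ w ∈ W, r w = 0) ∧
  (¬ ∃ a : ℝ, ∀ w ∈ W, w ≠ 0 → r w = a) ∧
  (∀ w ∈ W, ∀ ε₀ > (0 : ℝ), ∃ δ₀ > (0 : ℝ), ∀ u ∈ W, ‖u - w‖ < δ₀ → r w - ε₀ < r u)

open Complex

lemma IsPreconnected.apply_eq_of_forall_dist_lt {α X : Type*} [PseudoMetricSpace α] {S : Set α}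
    (hS : IsPreconnected S) {f : α → X} {ε : ℝ} (hε : 0 < ε)
    (hf : ∀ a ∈ S, ∀ b ∈ S, dist a b < ε → f a = f b) {a b : α} (ha : a ∈ S) (hb : b ∈ S) :
    f a = f b := by
  have := isPreconnected_iff_preconnectedSpace.mp hS
  have hloc : IsLocallyConstant fun x : S => f x :=
    (IsLocallyConstant.iff_eventually_eq _).mpr fun x =>
      Filter.eventually_of_mem (Metric.ball_mem_nhds x hε) fun y hy => hf y y.2 x x.2 hy
  exact hloc.apply_eq_of_preconnectedSpace ⟨a, ha⟩ ⟨b, hb⟩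

lemma Complex.norm_one_sub_mul_I (δ : ℝ) : ‖1 - δ * I‖ = √(1 + δ ^ 2) := by
  simpa [sub_eq_add_neg] using norm_add_mul_I 1 (-δ)

lemma Complex.exp_two_arctan_mul_I (δ : ℝ) :
    exp (↑(2 * Real.arctan δ) * I) = (1 + δ * I) / (1 - δ * I) := by
  have hs : ((√(1 + δ ^ 2) : ℝ) : ℂ) ^ 2 = 1 + δ ^ 2 := by
    norm_cast; exact Real.sq_sqrt (by positivity)
  have hs₀ : ((√(1 + δ ^ 2) : ℝ) : ℂ) ≠ 0 := by norm_cast; positivity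
  have hne : (1 - δ * I : ℂ) ≠ 0 := by
    rw [← norm_ne_zero_iff, norm_one_sub_mul_I]; positivity
  rw [ofReal_mul, ofReal_ofNat, mul_assoc, two_mul, exp_add, exp_mul_I, ← ofReal_cos,
    ← ofReal_sin, Real.cos_arctan, Real.sin_arctan, eq_div_iff hne]
  push_cast
  field_simp
  linear_combination -(1 + δ * I) * hs - δ ^ 2 * (1 + δ * I) * I_sq

def PerpMoveInvariant {X : Type*} (c : ℝ) (R : ℂ → X) : Prop :=
  ∀ (z : ℂ) (δ : ℝ), ‖z‖ ≤ 1 → ‖(1 - δ * I) * z‖ ≤ 1 → |δ| < c * ‖z‖ → R ((1 - δ * I) * z) = R z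

namespace PerpMoveInvariant

variable {X : Type*} {c : ℝ} {R : ℂ → X}

lemma apply_exp_two_arctan_mul (h : PerpMoveInvariant c R) {z : ℂ} (hz : ‖z‖ ≤ 1) {δ : ℝ}
    (hδ₁ : |δ| ≤ 1) (hδ : 2 * |δ| < c * ‖z‖) :
    R (exp (↑(2 * Real.arctan δ) * I) * z) = R z := by
  have hsqrt : 1 ≤ √(1 + δ ^ 2) := Real.one_le_sqrt.mpr (by nlinarith)
  have hsqrt₂ : √(1 + δ ^ 2) ≤ 2 :=
    Real.sqrt_le_iff.mpr ⟨by norm_num, by nlinarith [abs_mul_abs_self δ, abs_nonneg δ]⟩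
  have hne : (1 - δ * I : ℂ) ≠ 0 := by
    rw [← norm_ne_zero_iff, norm_one_sub_mul_I]; positivity
  set z₁ := z / (1 - δ * I) with hz₁_def
  have hz₁ : ‖z₁‖ * √(1 + δ ^ 2) = ‖z‖ := by
    rw [hz₁_def, norm_div, norm_one_sub_mul_I, div_mul_cancel₀ _ (by positivity)]
  have hz₁_le : ‖z₁‖ ≤ 1 := by nlinarith [norm_nonneg z₁]
  have hδz₁ : |δ| < c * ‖z₁‖ := by
    refine lt_of_mul_lt_mul_right ?_ (by positivity : 0 ≤ √(1 + δ ^ 2))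
    rw [mul_assoc, hz₁]
    nlinarith [abs_nonneg δ]
  have hback : (1 - δ * I) * z₁ = z := by rw [hz₁_def]; field_simp
  have hrot : (1 - ↑(-δ) * I) * z₁ = exp (↑(2 * Real.arctan δ) * I) * z := by
    rw [exp_two_arctan_mul_I, hz₁_def]; push_cast; field_simp; ring
  have hnorm : ‖(1 - ↑(-δ) * I) * z₁‖ = ‖z‖ := by
    rw [norm_mul, norm_one_sub_mul_I, neg_sq, mul_comm, hz₁]
  calc R (exp (↑(2 * Real.arctan δ) * I) * z) = R ((1 - ↑(-δ) * I) * z₁) := by rw [hrot]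
    _ = R z₁ := h z₁ (-δ) hz₁_le (hnorm ▸ hz) (by rwa [abs_neg])
    _ = R ((1 - δ * I) * z₁) := (h z₁ δ hz₁_le (by rwa [hback]) hδz₁).symm
    _ = R z := by rw [hback]

lemma apply_exp_mul (h : PerpMoveInvariant c R) (hc : 0 < c) {z : ℂ} (hz₀ : z ≠ 0)
    (hz : ‖z‖ ≤ 1) (θ : ℝ) : R (exp (θ * I) * z) = R z := by
  set b := min 1 (c * ‖z‖ / 2)
  have hb : 0 < b := lt_min one_pos (by have := norm_pos_iff.mpr hz₀; positivity)
  have hsmall : ∀ y : ℝ, |y| < 2 * Real.arctan b → ∀ w : ℂ, ‖w‖ = ‖z‖ →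
      R (exp (y * I) * w) = R w := by
    intro y hy w hw
    have hy₂ : |y / 2| < Real.arctan b := by rw [abs_div, abs_two]; linarith
    have hy_bound := abs_lt.mp (hy₂.trans (Real.arctan_lt_pi_div_two b))
    have htan : Real.arctan (Real.tan (y / 2)) = y / 2 := Real.arctan_tan hy_bound.1 hy_bound.2
    have hδb : |Real.tan (y / 2)| < b := by
      obtain ⟨hlo, hhi⟩ := abs_lt.mp hy₂
      refine abs_lt.mpr ⟨Real.arctan_strictMono.lt_iff_lt.mp ?_,
        Real.arctan_strictMono.lt_iff_lt.mp ?_⟩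
      · rwa [Real.arctan_neg, htan]
      · rwa [htan]
    rw [show y = 2 * Real.arctan (Real.tan (y / 2)) by rw [htan]; ring]
    refine h.apply_exp_two_arctan_mul (hw ▸ hz) (hδb.le.trans (min_le_left _ _)) ?_
    rw [hw]; linarith [hδb.trans_le (min_le_right _ _)]
  have := IsPreconnected.apply_eq_of_forall_dist_lt isPreconnected_univ
    (f := fun θ : ℝ => R (exp (θ * I) * z)) (by positivity : 0 < 2 * Real.arctan b)
    (fun a _ a' _ haa' => by
      have := hsmall (a - a') haa' (exp (a' * I) * z) (by simp)
      rwa [← mul_assoc, ← exp_add, ofReal_sub, sub_mul, sub_add_cancel] at this)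
    (Set.mem_univ θ) (Set.mem_univ 0)
  simpa using this

lemma apply_eq_apply_norm (h : PerpMoveInvariant c R) (hc : 0 < c) {z : ℂ} (hz₀ : z ≠ 0)
    (hz : ‖z‖ ≤ 1) : R z = R ‖z‖ := by
  have := h.apply_exp_mul hc (z := ‖z‖) (by simpa using hz₀) (by simpa using hz) z.arg
  rwa [mul_comm, norm_mul_exp_arg_mul_I] at this

lemma apply_ofReal_eq_of_sq_sub_sq_lt (h : PerpMoveInvariant c R) (hc : 0 < c) {s t : ℝ}
    (hs : 0 < s) (hst : s ≤ t) (ht : t ≤ 1) (hts : t ^ 2 - s ^ 2 < c ^ 2 * s ^ 4) :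
    R t = R s := by
  set δ := √(t ^ 2 - s ^ 2) / s
  have hδ_sq : s ^ 2 * (1 + δ ^ 2) = t ^ 2 := by
    rw [div_pow, Real.sq_sqrt (by nlinarith)]; field_simp; ring
  have hnorm : ‖(1 - δ * I) * s‖ = t := by
    rw [norm_mul, norm_one_sub_mul_I, norm_real, Real.norm_of_nonneg hs.le, mul_comm,
      ← Real.sqrt_sq hs.le, ← Real.sqrt_mul (by positivity), hδ_sq, Real.sqrt_sq (by linarith)]
  have hδ : |δ| < c * ‖(s : ℂ)‖ := by
    rw [abs_of_nonneg (by positivity), norm_real, Real.norm_of_nonneg hs.le,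
      div_lt_iff₀ hs, Real.sqrt_lt' (by positivity)]
    linarith
  calc R t = R ‖(1 - δ * I) * s‖ := by rw [hnorm]
    _ = R ((1 - δ * I) * s) :=
      (h.apply_eq_apply_norm hc (norm_pos_iff.mp (hnorm ▸ hs.trans_le hst)) (hnorm ▸ ht)).symm
    _ = R s := h s δ (by simpa [abs_of_pos hs] using hst.trans ht) (hnorm ▸ ht) hδ

lemma apply_ofReal_eq (h : PerpMoveInvariant c R) (hc : 0 < c) {s t : ℝ} (hs : 0 < s)
    (hst : s ≤ t) (ht : t ≤ 1) : R t = R s := by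
  refine isPreconnected_Icc.apply_eq_of_forall_dist_lt (f := fun x : ℝ => R x)
    (by positivity : 0 < c ^ 2 * s ^ 4 / 2) ?_ ⟨hst, ht⟩ ⟨le_rfl, hst.trans ht⟩
  intro a ha b hb hab
  wlog hba : b ≤ a generalizing a b
  · exact (this b hb a ha (by rwa [dist_comm]) (le_of_not_ge hba)).symm
  rw [Real.dist_eq, abs_of_nonneg (sub_nonneg.mpr hba)] at hab
  have hs_b : s ^ 4 ≤ b ^ 4 := pow_le_pow_left₀ hs.le hb.1 4
  exact h.apply_ofReal_eq_of_sq_sub_sq_lt hc (hs.trans_le hb.1) hba ha.2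
    (by nlinarith [ha.2, hb.2, hb.1])

lemma apply_eq (h : PerpMoveInvariant c R) (hc : 0 < c) {z w : ℂ} (hz₀ : z ≠ 0) (hw₀ : w ≠ 0)
    (hz : ‖z‖ ≤ 1) (hw : ‖w‖ ≤ 1) : R z = R w := by
  rw [h.apply_eq_apply_norm hc hz₀ hz, h.apply_eq_apply_norm hc hw₀ hw]
  rcases le_total ‖z‖ ‖w‖ with hzw | hwz
  · exact (h.apply_ofReal_eq hc (norm_pos_iff.mpr hz₀) hzw hw).symm
  · exact h.apply_ofReal_eq hc (norm_pos_iff.mpr hw₀) hwz hz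

end PerpMoveInvariant

lemma orthonormalBasisOneI_repr_one_sub_mul_I_mul (δ : ℝ) (z : ℂ) :
    orthonormalBasisOneI.repr ((1 - δ * I) * z) =
      orthonormalBasisOneI.repr z + δ • perp (orthonormalBasisOneI.repr z) := by
  ext i
  fin_cases i <;> simp [perp, toE2]

theorem stmt19 (r : Euc 2 → ℝ) (hr : AdmissibleOn (closedBall 0 1) r) :
    ∃ w₁ ∈ closedBall (0 : Euc 2) 1, ∃ w₂ ∈ closedBall (0 : Euc 2) 1, ∃ δ : ℝ,
      -0.005 * ‖w₁‖ < δ ∧ δ < 0.005 * ‖w₁‖ ∧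
      w₂ = w₁ + δ • perp w₁ ∧ r w₁ ≠ r w₂ := by
  by_contra! hcon
  set e := orthonormalBasisOneI.repr
  have hinv : PerpMoveInvariant 0.005 (fun z => r (e z)) := by
    intro z δ hz hz' hδ
    obtain ⟨hlo, hhi⟩ := abs_lt.mp hδ
    exact (hcon (e z) (by simpa using hz) _ (by simpa using hz') δ (by simpa using hlo)
      (by simpa using hhi) (orthonormalBasisOneI_repr_one_sub_mul_I_mul δ z)).symm
  refine hr.2.2.1 ⟨r (e 1), fun w hw hw₀ => ?_⟩
  obtain ⟨z, rfl⟩ := e.surjective w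
  exact hinv.apply_eq (by norm_num) (by simpa using hw₀) one_ne_zero
    (by simpa using hw) (by simp)
end
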